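/- arXiv:2402.15326 — 4 statements merged into one kernel-verified Lean document; each statement's English description precedes it below -/
import Mathlib

section
/- Let n ≥ 1 and let A be an n×n real row-stochastic irreducible matrix (for all u, v there exists k ≥ 1 with (A^k) u v > 0). Let μ : Fin n → ℝ be a probability vector (μ(u) ≥ 0, ∑_u μ(u) = 1) with μᵀ A = μᵀ, and assume the detailed-balance condition μ(u) A u v = μ(v) A v u with μ(u) > 0 for all u, v. Then for every f : Fin n → ℝ and every u, (exp(t • (A − I)) · f)(u) converges, as t → ∞, to the constant ∑_v f(v) μ(v). -/
/-!
Detailed balance makes `A` self-adjoint in `L²(μ)`: `⟨x, (A - 1) x⟩_μ = -𝓔 x`, where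
`𝓔 x = ½ ∑ μ(u) A(u,v) (x u - x v)²` is the Dirichlet form. By irreducibility `𝓔` vanishes only on
constants, so by compactness it dominates `ε ‖x‖²_μ` on vectors of `μ`-mean zero (a spectral gap).
The deviation `y t = P_t f - ⟨f⟩_μ` keeps `μ`-mean zero because `μ` is invariant, and its energy
`‖y t‖²_μ` has derivative `-2 𝓔 (y t) ≤ -2ε ‖y t‖²_μ`, so it decays like `exp (-2εt)`.
-/

open Matrix Filter Topology

section

variable {E : Type*} [NormedAddCommGroup E] [NormedSpace ℝ E] [FiniteDimensional ℝ E]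

/-- Rescale to the unit sphere, where `Q / (|N| + 1)` has a positive minimum. -/
theorem exists_pos_mul_le_of_sq_homogeneous {Q N : E → ℝ} (hQ : Continuous Q) (hN : Continuous N)
    (hQ_smul : ∀ (a : ℝ) x, Q (a • x) = a ^ 2 * Q x)
    (hN_smul : ∀ (a : ℝ) x, N (a • x) = a ^ 2 * N x)
    (hQ_pos : ∀ x ≠ 0, 0 < Q x) : ∃ ε > 0, ∀ x, ε * N x ≤ Q x := by
  obtain ⟨ε, hε, hle⟩ := (isCompact_sphere (0 : E) 1).exists_forall_le'
    (f := fun x => Q x / (|N x| + 1))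
    (hQ.div (by fun_prop) fun x => by positivity).continuousOn (a := 0) fun x hx =>
      div_pos (hQ_pos x (ne_zero_of_mem_unit_sphere ⟨x, hx⟩)) (by positivity)
  refine ⟨ε, hε, fun x => ?_⟩
  rcases eq_or_ne x 0 with rfl | hx
  · simp [by simpa using hQ_smul 0 0, by simpa using hN_smul 0 0]
  obtain ⟨r, u, hu, rfl⟩ : ∃ (r : ℝ) (u : E), u ∈ Metric.sphere (0 : E) 1 ∧ x = r • u :=
    ⟨‖x‖, ‖x‖⁻¹ • x, by simp [norm_smul, hx], by simp [smul_smul, hx]⟩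
  have hεu : ε * N u ≤ Q u := by
    have := (le_div_iff₀ (by positivity)).1 (hle u hu)
    nlinarith [le_abs_self (N u)]
  rw [hQ_smul, hN_smul]
  nlinarith [mul_le_mul_of_nonneg_left hεu (sq_nonneg r)]
end

theorem le_mul_exp_neg_of_hasDerivAt_le {E E' : ℝ → ℝ} {c : ℝ} (hE : ∀ t, HasDerivAt E (E' t) t)
    (hE' : ∀ t, E' t ≤ -c * E t) {t : ℝ} (ht : 0 ≤ t) : E t ≤ E 0 * Real.exp (-(c * t)) := by
  have hanti : Antitone fun s => E s * Real.exp (c * s) := by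
    refine antitone_of_hasDerivAt_nonpos
      (fun s => (hE s).mul ((hasDerivAt_id s).const_mul c).exp) fun s => ?_
    have := mul_le_mul_of_nonneg_right (hE' s) (Real.exp_pos (c * s)).le
    simp only [id, mul_one, Pi.zero_apply]
    linarith
  have := hanti ht
  rw [Real.exp_neg, ← div_eq_mul_inv, le_div_iff₀ (Real.exp_pos _)]
  simpa using this

theorem tendsto_zero_of_hasDerivAt_le_neg_mul {E E' : ℝ → ℝ} {c : ℝ} (hc : 0 < c)
    (hE_nonneg : ∀ t, 0 ≤ E t) (hE : ∀ t, HasDerivAt E (E' t) t) (hE' : ∀ t, E' t ≤ -c * E t) :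
    Tendsto E atTop (𝓝 0) := by
  have hexp : Tendsto (fun t => E 0 * Real.exp (-(c * t))) atTop (𝓝 0) := by
    simpa using (Real.tendsto_exp_neg_atTop_nhds_zero.comp
      (tendsto_id.const_mul_atTop hc)).const_mul (E 0)
  exact squeeze_zero' (.of_forall hE_nonneg)
    (eventually_atTop.2 ⟨0, fun t => le_mul_exp_neg_of_hasDerivAt_le hE hE'⟩) hexp

theorem tendsto_apply_of_tendsto_sum_mul_sq {α ι : Type*} [Fintype ι] {l : Filter α}
    {μ : ι → ℝ} {y : α → ι → ℝ} (hμ : ∀ v, 0 ≤ μ v) {u : ι} (hu : 0 < μ u)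
    (h : Tendsto (fun t => ∑ v, μ v * y t v ^ 2) l (𝓝 0)) : Tendsto (fun t => y t u) l (𝓝 0) := by
  have hsq : Tendsto (fun t => y t u ^ 2) l (𝓝 0) := by
    refine squeeze_zero (fun t => sq_nonneg _) (fun t => ?_) (by simpa using h.const_mul (μ u)⁻¹)
    rw [le_inv_mul_iff₀ hu]
    exact Finset.single_le_sum (f := fun v => μ v * y t v ^ 2)
      (fun v _ => mul_nonneg (hμ v) (sq_nonneg _)) (Finset.mem_univ u)
  rw [tendsto_zero_iff_abs_tendsto_zero]
  simpa [Function.comp_def, Real.sqrt_sq_eq_abs] using (Real.continuous_sqrt.tendsto 0).comp hsq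

section

attribute [local instance] Matrix.linftyOpNormedRing Matrix.linftyOpNormedAlgebra

theorem hasDerivAt_exp_smul_mulVec {ι : Type*} [Fintype ι] [DecidableEq ι] (B : Matrix ι ι ℝ)
    (f : ι → ℝ) (t : ℝ) :
    HasDerivAt (fun s : ℝ => NormedSpace.exp (s • B) *ᵥ f)
      (B *ᵥ (NormedSpace.exp (t • B) *ᵥ f)) t := by
  rw [mulVec_mulVec]
  exact (LinearMap.toContinuousLinearMap ((mulVecBilin ℝ ℝ).flip f)).hasFDerivAt.comp_hasDerivAt t
    (hasDerivAt_exp_smul_const' B t)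
end

section

variable {ι : Type*} [Fintype ι]

noncomputable def dirichletForm (A : Matrix ι ι ℝ) (μ x : ι → ℝ) : ℝ :=
  (∑ u, ∑ v, μ u * A u v * (x u - x v) ^ 2) / 2

variable {A : Matrix ι ι ℝ} {μ : ι → ℝ}

theorem dirichletForm_nonneg (hμ : ∀ u, 0 ≤ μ u) (hA : ∀ u v, 0 ≤ A u v) (x : ι → ℝ) :
    0 ≤ dirichletForm A μ x := by
  unfold dirichletForm
  exact div_nonneg (Finset.sum_nonneg fun u _ => Finset.sum_nonneg fun v _ =>
    mul_nonneg (mul_nonneg (hμ u) (hA u v)) (sq_nonneg _)) zero_le_two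

theorem dirichletForm_smul (a : ℝ) (x : ι → ℝ) :
    dirichletForm A μ (a • x) = a ^ 2 * dirichletForm A μ x := by
  simp only [dirichletForm, Pi.smul_apply, smul_eq_mul, Finset.mul_sum, mul_div_assoc']
  congr 1
  refine Finset.sum_congr rfl fun u _ => Finset.sum_congr rfl fun v _ => ?_
  ring

theorem sum_mul_sub_one_mulVec_eq_neg_dirichletForm [DecidableEq ι]
    (hA_row : ∀ u, ∑ v, A u v = 1) (hdb : ∀ u v, μ u * A u v = μ v * A v u) (x : ι → ℝ) :
    ∑ u, μ u * x u * ((A - 1) *ᵥ x) u = -dirichletForm A μ x := by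
  have hgen : ∀ u, ((A - 1) *ᵥ x) u = ∑ v, A u v * (x v - x u) := fun u => by
    rw [sub_mulVec, one_mulVec]
    simp [mulVec, dotProduct, mul_sub, ← Finset.sum_mul, hA_row]
  have hsymm : ∑ u, ∑ v, μ u * A u v * (x u * (x v - x u))
      = ∑ u, ∑ v, μ u * A u v * (x v * (x u - x v)) := by
    rw [Finset.sum_comm]
    exact Finset.sum_congr rfl fun u _ => Finset.sum_congr rfl fun v _ => by rw [hdb]
  have hS : ∑ u, μ u * x u * ((A - 1) *ᵥ x) u = ∑ u, ∑ v, μ u * A u v * (x u * (x v - x u)) := by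
    refine Finset.sum_congr rfl fun u _ => ?_
    rw [hgen, Finset.mul_sum]
    exact Finset.sum_congr rfl fun v _ => by ring
  have hsum : ∑ u, ∑ v, μ u * A u v * (x u * (x v - x u))
      + ∑ u, ∑ v, μ u * A u v * (x v * (x u - x v))
      = -∑ u, ∑ v, μ u * A u v * (x u - x v) ^ 2 := by
    simp only [← Finset.sum_add_distrib, ← Finset.sum_neg_distrib]
    exact Finset.sum_congr rfl fun u _ => Finset.sum_congr rfl fun v _ => by ring
  rw [hS, dirichletForm]
  linarith

theorem apply_eq_of_pow_apply_pos {α : Type*} [DecidableEq ι] {x : ι → α}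
    (hA : ∀ u v, 0 ≤ A u v) (hx : ∀ u v, 0 < A u v → x u = x v) (k : ℕ) :
    ∀ u v, 0 < (A ^ k) u v → x u = x v := by
  induction k with
  | zero =>
    intro u v h
    rw [pow_zero, one_apply] at h
    split_ifs at h with huv
    · rw [huv]
    · exact absurd h (lt_irrefl 0)
  | succ k ih =>
    intro u v h
    rw [pow_succ, mul_apply] at h
    obtain ⟨w, -, hw⟩ := Finset.exists_lt_of_sum_lt (f := fun _ => (0 : ℝ)) (by simpa using h)
    have hwv : 0 < A w v := (hA w v).lt_of_ne fun h0 => by simp [← h0] at hw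
    exact (ih u w (pos_of_mul_pos_left hw hwv.le)).trans (hx w v hwv)

theorem apply_eq_of_dirichletForm_eq_zero [DecidableEq ι] (hμ : ∀ u, 0 < μ u)
    (hA : ∀ u v, 0 ≤ A u v) (hA_irr : ∀ u v, ∃ k : ℕ, 0 < (A ^ k) u v) {x : ι → ℝ}
    (hx : dirichletForm A μ x = 0) (u v : ι) : x u = x v := by
  have hterm_nonneg : ∀ u v, 0 ≤ μ u * A u v * (x u - x v) ^ 2 := fun u v =>
    mul_nonneg (mul_nonneg (hμ u).le (hA u v)) (sq_nonneg _)
  have hterm : ∀ u v, μ u * A u v * (x u - x v) ^ 2 = 0 := by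
    simp only [dirichletForm, div_eq_zero_iff, two_ne_zero, or_false] at hx
    rw [Fintype.sum_eq_zero_iff_of_nonneg fun u => Finset.sum_nonneg fun v _ => hterm_nonneg u v]
      at hx
    exact fun u => congrFun ((Fintype.sum_eq_zero_iff_of_nonneg (hterm_nonneg u)).1 (congrFun hx u))
  obtain ⟨k, hk⟩ := hA_irr u v
  refine apply_eq_of_pow_apply_pos hA (fun u v huv => ?_) k u v hk
  have := (mul_eq_zero.1 (hterm u v)).resolve_left (mul_pos (hμ u) huv).ne'
  exact sub_eq_zero.1 (pow_eq_zero_iff two_ne_zero |>.1 this)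

theorem exists_pos_mul_sum_mul_sq_le_dirichletForm [DecidableEq ι] (hμ_pos : ∀ u, 0 < μ u)
    (hμ_sum : ∑ u, μ u = 1) (hA : ∀ u v, 0 ≤ A u v) (hA_irr : ∀ u v, ∃ k : ℕ, 0 < (A ^ k) u v) :
    ∃ ε > 0, ∀ x, μ ⬝ᵥ x = 0 → ε * ∑ u, μ u * x u ^ 2 ≤ dirichletForm A μ x := by
  have hD := dirichletForm_nonneg (fun u => (hμ_pos u).le) hA
  have hpos : ∀ x, x ≠ 0 → 0 < dirichletForm A μ x + (μ ⬝ᵥ x) ^ 2 := by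
    intro x hx
    by_contra! hle
    have hmean : μ ⬝ᵥ x = 0 := by nlinarith [hD x, sq_nonneg (μ ⬝ᵥ x)]
    have hconst := apply_eq_of_dirichletForm_eq_zero hμ_pos hA hA_irr
      (le_antisymm (by nlinarith [sq_nonneg (μ ⬝ᵥ x)]) (hD x))
    refine hx (funext fun u => ?_)
    rw [Pi.zero_apply, ← hmean, dotProduct, Finset.sum_congr rfl fun v _ => by rw [hconst v u],
      ← Finset.sum_mul, hμ_sum, one_mul]
  obtain ⟨ε, hε, h⟩ := exists_pos_mul_le_of_sq_homogeneous
    (Q := fun x => dirichletForm A μ x + (μ ⬝ᵥ x) ^ 2) (N := fun x => ∑ u, μ u * x u ^ 2)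
    (by unfold dirichletForm dotProduct; fun_prop) (by fun_prop)
    (fun a x => by simp only [dirichletForm_smul, dotProduct_smul, smul_eq_mul]; ring)
    (fun a x => by
      simp only [Pi.smul_apply, smul_eq_mul, Finset.mul_sum]
      exact Finset.sum_congr rfl fun u _ => by ring) hpos
  exact ⟨ε, hε, fun x hx => by simpa [hx] using h x⟩

theorem dotProduct_eq_of_hasDerivAt {B : Matrix ι ι ℝ} (hμ : μ ᵥ* B = 0) {y : ℝ → ι → ℝ}
    (hy : ∀ t, HasDerivAt y (B *ᵥ y t) t) (t : ℝ) : μ ⬝ᵥ y t = μ ⬝ᵥ y 0 := by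
  have hderiv : ∀ t, HasDerivAt (fun s => μ ⬝ᵥ y s) 0 t := fun t => by
    have := HasDerivAt.fun_sum fun u (_ : u ∈ Finset.univ) =>
      (hasDerivAt_pi.1 (hy t) u).const_mul (μ u)
    rwa [← dotProduct, dotProduct_mulVec, hμ, zero_dotProduct] at this
  exact is_const_of_deriv_eq_zero (fun t => (hderiv t).differentiableAt)
    (fun t => (hderiv t).deriv) t 0

theorem hasDerivAt_sum_mul_sq [DecidableEq ι] (hA_row : ∀ u, ∑ v, A u v = 1)
    (hdb : ∀ u v, μ u * A u v = μ v * A v u) {y : ℝ → ι → ℝ}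
    (hy : ∀ t, HasDerivAt y ((A - 1) *ᵥ y t) t) (t : ℝ) :
    HasDerivAt (fun s => ∑ u, μ u * y s u ^ 2) (-2 * dirichletForm A μ (y t)) t := by
  refine (HasDerivAt.fun_sum fun u (_ : u ∈ Finset.univ) =>
    ((hasDerivAt_pi.1 (hy t) u).pow 2).const_mul (μ u)).congr_deriv ?_
  rw [show -2 * dirichletForm A μ (y t) = 2 * -dirichletForm A μ (y t) by ring,
    ← sum_mul_sub_one_mulVec_eq_neg_dirichletForm hA_row hdb, Finset.mul_sum]
  exact Finset.sum_congr rfl fun u _ => by push_cast; ring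

theorem tendsto_zero_of_hasDerivAt_sub_one_mulVec [DecidableEq ι] (hμ_pos : ∀ u, 0 < μ u)
    (hμ_sum : ∑ u, μ u = 1) (hμ_inv : μ ᵥ* A = μ) (hdb : ∀ u v, μ u * A u v = μ v * A v u)
    (hA : ∀ u v, 0 ≤ A u v) (hA_row : ∀ u, ∑ v, A u v = 1)
    (hA_irr : ∀ u v, ∃ k : ℕ, 0 < (A ^ k) u v) {y : ℝ → ι → ℝ}
    (hy : ∀ t, HasDerivAt y ((A - 1) *ᵥ y t) t) (hy₀ : μ ⬝ᵥ y 0 = 0) (u : ι) :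
    Tendsto (fun t => y t u) atTop (𝓝 0) := by
  obtain ⟨ε, hε, hgap⟩ := exists_pos_mul_sum_mul_sq_le_dirichletForm hμ_pos hμ_sum hA hA_irr
  have hmean : ∀ t, μ ⬝ᵥ y t = 0 := fun t => by
    rw [dotProduct_eq_of_hasDerivAt (by rw [vecMul_sub, vecMul_one, hμ_inv, sub_self]) hy, hy₀]
  refine tendsto_apply_of_tendsto_sum_mul_sq (fun v => (hμ_pos v).le) (hμ_pos u) ?_
  refine tendsto_zero_of_hasDerivAt_le_neg_mul (mul_pos two_pos hε)
    (fun t => Finset.sum_nonneg fun v _ => mul_nonneg (hμ_pos v).le (sq_nonneg _))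
    (hasDerivAt_sum_mul_sq hA_row hdb hy) fun t => ?_
  linarith [hgap (y t) (hmean t)]

end

theorem oversmoothing_convergence_to_invariant_average_general
    (n : ℕ) (A : Matrix (Fin n) (Fin n) ℝ)
    (hA_nonneg : ∀ u v, 0 ≤ A u v) (hA_row : ∀ u, ∑ v, A u v = 1)
    (hA_irr : ∀ u v, ∃ k : ℕ, 1 ≤ k ∧ 0 < (A ^ k) u v)
    (μ : Fin n → ℝ) (hμ_sum : ∑ u, μ u = 1)
    (hμ_inv : ∀ v, ∑ u, μ u * A u v = μ v)
    (hμ_pos : ∀ u, 0 < μ u)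
    (hdb : ∀ u v, μ u * A u v = μ v * A v u) :
    ∀ f : Fin n → ℝ, ∀ u : Fin n,
      Tendsto (fun t : ℝ => (NormedSpace.exp (t • (A - 1))).mulVec f u)
        atTop (nhds (∑ v, f v * μ v)) := by
  intro f u
  set c := ∑ v, f v * μ v
  have hconst : (A - 1) *ᵥ (fun _ => c) = 0 := by
    ext w
    rw [sub_mulVec, one_mulVec]
    simp [mulVec, dotProduct, ← Finset.sum_mul, hA_row]
  have hy : ∀ t, HasDerivAt (fun s => NormedSpace.exp (s • (A - 1)) *ᵥ f - fun _ => c)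
      ((A - 1) *ᵥ (NormedSpace.exp (t • (A - 1)) *ᵥ f - fun _ => c)) t := fun t => by
    rw [mulVec_sub, hconst, sub_zero]
    exact (hasDerivAt_exp_smul_mulVec _ f t).sub_const _
  have hy₀ : μ ⬝ᵥ (NormedSpace.exp ((0 : ℝ) • (A - 1)) *ᵥ f - fun _ => c) = 0 := by
    rw [zero_smul, NormedSpace.exp_zero, one_mulVec, dotProduct_sub]
    simp [c, dotProduct, ← Finset.sum_mul, hμ_sum, mul_comm]
  have hA_irr' : ∀ u v, ∃ k : ℕ, 0 < (A ^ k) u v := fun u v => (hA_irr u v).imp fun _ => And.right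
  simpa using (tendsto_zero_of_hasDerivAt_sub_one_mulVec hμ_pos hμ_sum (funext hμ_inv) hdb
    hA_nonneg hA_row hA_irr' hy hy₀ u).add_const c

/-- Theorem 4.3, oversmoothing: For a row-stochastic irreducible matrix
`A` with invariant probability vector `μ` satisfying detailed balance (with `μ > 0`),
every node feature `(exp (t • (A - 1)) f) u` converges, as `t → ∞`, to the constant
`∑_v f(v) μ(v)`. -/
theorem oversmoothing_convergence_to_invariant_average
    (n : ℕ) (hn : 1 ≤ n) (A : Matrix (Fin n) (Fin n) ℝ)
    (hA_nonneg : ∀ u v, 0 ≤ A u v) (hA_row : ∀ u, ∑ v, A u v = 1)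
    (hA_irr : ∀ u v, ∃ k : ℕ, 1 ≤ k ∧ 0 < (A ^ k) u v)
    (μ : Fin n → ℝ) (hμ_nonneg : ∀ u, 0 ≤ μ u) (hμ_sum : ∑ u, μ u = 1)
    (hμ_inv : ∀ v, ∑ u, μ u * A u v = μ v)
    (hμ_pos : ∀ u, 0 < μ u)
    (hdb : ∀ u v, μ u * A u v = μ v * A v u) :
    ∀ f : Fin n → ℝ, ∀ u : Fin n,
      Tendsto (fun t : ℝ => (NormedSpace.exp (t • (A - 1))).mulVec f u)
        atTop (nhds (∑ v, f v * μ v)) :=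
  oversmoothing_convergence_to_invariant_average_general n A hA_nonneg hA_row hA_irr μ hμ_sum hμ_inv
    hμ_pos hdb
end

section
/- Let n ≥ 1, let ν be a probability vector on Fin n, let ε ∈ (0, 1], and let A⁽⁰⁾, A⁽¹⁾, … be row-stochastic matrices with A⁽ᵏ⁾ u v ≥ ε · ν(v) for all k, u, v. Set P_t = A⁽ᵗ⁾ ⋯ A⁽⁰⁾ and, for f : Fin n → ℝ, define h_t(u) = ∑_w P_t u w · f(w). Then for all t, u, v: |h_t(u) − h_t(v)| ≤ 2 · (max_w |f(w)|) · (1 − ε)^t; consequently |h_t(u) − h_t(v)| → 0 as t → ∞, i.e. all node features of the nonlinear diffusion converge to a common value (oversmoothing). -/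
/-!
Subtracting the common part `ε ν` from every row of a Doeblin matrix `A` leaves nonnegative rows
of mass `1 - ε`, and comparing two such rows against a vector whose entries lie in an interval of
length `c` gives `|(A g) u - (A g) v| ≤ (1 - ε) c`. Iterating along `P_t = A⁽ᵗ⁾ ⋯ A⁽⁰⁾`, starting
from `|f i - f j| ≤ 2 max |f|`, yields the geometric bound.
-/

open Matrix Filter

variable {ι κ : Type*} [Fintype ι]

lemma abs_sum_mul_sub_sum_mul_le {p q g : ι → ℝ} {c : ℝ} (hp : 0 ≤ p) (hq : 0 ≤ q)
    (hpq : ∑ i, p i = ∑ i, q i) (hg : ∀ i j, |g i - g j| ≤ c) :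
    |∑ i, p i * g i - ∑ i, q i * g i| ≤ (∑ i, p i) * c := by
  cases isEmpty_or_nonempty ι
  · simp
  obtain ⟨i₀, hi₀⟩ := Finite.exists_min g
  have shifted : ∀ r : ι → ℝ, 0 ≤ r →
      0 ≤ ∑ i, r i * (g i - g i₀) ∧ ∑ i, r i * (g i - g i₀) ≤ (∑ i, r i) * c := by
    intro r hr
    refine ⟨Finset.sum_nonneg fun i _ => mul_nonneg (hr i) (sub_nonneg.2 (hi₀ i)), ?_⟩
    rw [Finset.sum_mul]
    exact Finset.sum_le_sum fun i _ =>
      mul_le_mul_of_nonneg_left ((le_abs_self _).trans (hg i i₀)) (hr i)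
  have hdiff : ∑ i, p i * g i - ∑ i, q i * g i
      = ∑ i, p i * (g i - g i₀) - ∑ i, q i * (g i - g i₀) := by
    simp only [mul_sub, Finset.sum_sub_distrib, ← Finset.sum_mul, hpq]
    ring
  obtain ⟨hp₀, hp₁⟩ := shifted p hp
  obtain ⟨hq₀, hq₁⟩ := shifted q hq
  rw [← hpq] at hq₁
  rw [hdiff, abs_sub_le_iff]
  constructor <;> linarith

lemma abs_mulVec_sub_mulVec_le {A : Matrix κ ι ℝ} {ν g : ι → ℝ} {ε c : ℝ}
    (hA_row : ∀ u, ∑ v, A u v = 1) (hν_sum : ∑ v, ν v = 1) (hDoeblin : ∀ u v, ε * ν v ≤ A u v)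
    (hg : ∀ i j, |g i - g j| ≤ c) (u v : κ) :
    |(A *ᵥ g) u - (A *ᵥ g) v| ≤ (1 - ε) * c := by
  have hrow_sum : ∀ x, ∑ k, (A x k - ε * ν k) = 1 - ε := fun x => by
    rw [Finset.sum_sub_distrib, hA_row, ← Finset.mul_sum, hν_sum, mul_one]
  have hcancel : (A *ᵥ g) u - (A *ᵥ g) v
      = ∑ k, (A u k - ε * ν k) * g k - ∑ k, (A v k - ε * ν k) * g k := by
    simp only [mulVec, dotProduct, sub_mul, Finset.sum_sub_distrib]
    ring
  rw [hcancel, ← hrow_sum u]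
  exact abs_sum_mul_sub_sum_mul_le (fun k => sub_nonneg.2 (hDoeblin u k))
    (fun k => sub_nonneg.2 (hDoeblin v k)) (by rw [hrow_sum, hrow_sum]) hg

lemma abs_prod_mulVec_sub_le {A P : ℕ → Matrix ι ι ℝ} {ν g : ι → ℝ} {ε c : ℝ}
    (hA_row : ∀ k u, ∑ v, A k u v = 1) (hν_sum : ∑ v, ν v = 1)
    (hDoeblin : ∀ k u v, ε * ν v ≤ A k u v)
    (hP0 : P 0 = A 0) (hPsucc : ∀ t, P (t + 1) = A (t + 1) * P t)
    (hg : ∀ i j, |g i - g j| ≤ c) (t : ℕ) (u v : ι) :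
    |(P t *ᵥ g) u - (P t *ᵥ g) v| ≤ (1 - ε) ^ (t + 1) * c := by
  induction t generalizing u v with
  | zero =>
    rw [hP0, zero_add, pow_one]
    exact abs_mulVec_sub_mulVec_le (hA_row 0) hν_sum (hDoeblin 0) hg u v
  | succ t ih =>
    rw [hPsucc, ← mulVec_mulVec, pow_succ', mul_assoc]
    exact abs_mulVec_sub_mulVec_le (hA_row _) hν_sum (hDoeblin _) ih u v

theorem nonlinear_diffusion_oversmoothing_general
    (n : ℕ) (hn : 1 ≤ n)
    (ν : Fin n → ℝ) (hν_sum : ∑ v, ν v = 1)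
    (ε : ℝ) (hε_pos : 0 < ε) (hε_le : ε ≤ 1)
    (A : ℕ → Matrix (Fin n) (Fin n) ℝ)
    (hA_row : ∀ k u, ∑ v, A k u v = 1)
    (hDoeblin : ∀ k u v, ε * ν v ≤ A k u v)
    (P : ℕ → Matrix (Fin n) (Fin n) ℝ)
    (hP0 : P 0 = A 0) (hPsucc : ∀ t, P (t + 1) = A (t + 1) * P t)
    (f : Fin n → ℝ)
    (h : ℕ → Fin n → ℝ) (hdef : ∀ t u, h t u = ∑ w, P t u w * f w) :
    (∀ t : ℕ, ∀ u v : Fin n,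
      |h t u - h t v| ≤
        2 * (Finset.univ.sup' ⟨⟨0, hn⟩, Finset.mem_univ _⟩ fun w => |f w|) * (1 - ε) ^ t) ∧
    (∀ u v : Fin n, Tendsto (fun t : ℕ => |h t u - h t v|) atTop (nhds 0)) := by
  set M := Finset.univ.sup' ⟨⟨0, hn⟩, Finset.mem_univ _⟩ fun w => |f w|
  have hfM : ∀ w, |f w| ≤ M := fun w => Finset.le_sup' (fun w => |f w|) (Finset.mem_univ w)
  have hM : 0 ≤ M := (abs_nonneg _).trans (hfM ⟨0, hn⟩)
  have hf : ∀ i j, |f i - f j| ≤ 2 * M := fun i j =>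
    (abs_sub _ _).trans (by linarith [hfM i, hfM j])
  have hbound : ∀ t u v, |h t u - h t v| ≤ 2 * M * (1 - ε) ^ t := by
    intro t u v
    calc |h t u - h t v| ≤ (1 - ε) ^ (t + 1) * (2 * M) := by
          rw [hdef, hdef]
          exact abs_prod_mulVec_sub_le hA_row hν_sum hDoeblin hP0 hPsucc hf t u v
      _ ≤ 2 * M * (1 - ε) ^ t := by
          rw [pow_succ]
          nlinarith [mul_nonneg (mul_nonneg (pow_nonneg (sub_nonneg.2 hε_le) t) hM) hε_pos.le]
  refine ⟨hbound, fun u v => squeeze_zero (fun t => abs_nonneg _) (hbound · u v) ?_⟩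
  simpa using (tendsto_pow_atTop_nhds_zero_of_lt_one (sub_nonneg.2 hε_le)
    (sub_lt_self 1 hε_pos)).const_mul (2 * M)

/-- corollary of Theorem 4.4, Section 4.2: Under the Doeblin
minorization, the node features `h_t u = ∑_w P_t u w * f w` of nonlinear graph diffusion
satisfy `|h_t u - h_t v| ≤ 2 (max_w |f w|) (1 - ε)^t`, hence `|h_t u - h_t v| → 0`:
all node features converge to a common value (oversmoothing). -/
theorem nonlinear_diffusion_oversmoothing
    (n : ℕ) (hn : 1 ≤ n)
    (ν : Fin n → ℝ) (hν_nonneg : ∀ v, 0 ≤ ν v) (hν_sum : ∑ v, ν v = 1)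
    (ε : ℝ) (hε_pos : 0 < ε) (hε_le : ε ≤ 1)
    (A : ℕ → Matrix (Fin n) (Fin n) ℝ)
    (hA_nonneg : ∀ k u v, 0 ≤ A k u v) (hA_row : ∀ k u, ∑ v, A k u v = 1)
    (hDoeblin : ∀ k u v, ε * ν v ≤ A k u v)
    (P : ℕ → Matrix (Fin n) (Fin n) ℝ)
    (hP0 : P 0 = A 0) (hPsucc : ∀ t, P (t + 1) = A (t + 1) * P t)
    (f : Fin n → ℝ)
    (h : ℕ → Fin n → ℝ) (hdef : ∀ t u, h t u = ∑ w, P t u w * f w) :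
    (∀ t : ℕ, ∀ u v : Fin n,
      |h t u - h t v| ≤
        2 * (Finset.univ.sup' ⟨⟨0, hn⟩, Finset.mem_univ _⟩ fun w => |f w|) * (1 - ε) ^ t) ∧
    (∀ u v : Fin n, Tendsto (fun t : ℕ => |h t u - h t v|) atTop (nhds 0)) :=
  nonlinear_diffusion_oversmoothing_general n hn ν hν_sum ε hε_pos hε_le A hA_row hDoeblin P hP0
    hPsucc f h hdef
end

section
/- Let n ≥ 1, let A be an n×n real matrix with all entries nonnegative, and let h ≥ 0. Then for every index u, the diagonal entry of the matrix exponential satisfies (exp(h • A)) u u ≥ exp(h · A u u). Consequently, if A is row-stochastic, (exp(h • (A − I))) u u ≥ exp(−h · (1 − A u u)), i.e. 1 − (exp(h(A − I))) u u ≤ 1 − e^{h(A u u − 1)}. -/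
/-!
For entrywise nonnegative `M`, the term of `(M ^ k) i i` coming from the constant path
`i → i → ⋯ → i` is `M i i ^ k`, and all other terms are nonnegative; summing the exponential
series term by term gives `exp (M i i) ≤ (exp M) i i`. The shift by `-1` factors out because
`h • 1` is central: `exp (h • (A - 1)) = exp (-h) • exp (h • A)`.
-/

open Matrix

namespace Matrix

variable {ι R : Type*} [Fintype ι] [DecidableEq ι]

theorem apply_self_pow_le_pow_apply_self [Semiring R] [PartialOrder R] [IsOrderedRing R]
    {M : Matrix ι ι R} (hM : ∀ i j, 0 ≤ M i j) (i : ι) (k : ℕ) :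
    M i i ^ k ≤ (M ^ k) i i := by
  induction k with
  | zero => simp
  | succ k ih =>
    rw [pow_succ, pow_succ, mul_apply]
    calc M i i ^ k * M i i ≤ (M ^ k) i i * M i i := mul_le_mul_of_nonneg_right ih (hM i i)
      _ ≤ ∑ j, (M ^ k) i j * M j i :=
        Finset.single_le_sum (f := fun j => (M ^ k) i j * M j i)
          (fun j _ => mul_nonneg (pow_apply_nonneg hM k i j) (hM j i)) (Finset.mem_univ i)

theorem hasSum_exp (M : Matrix ι ι ℝ) :
    HasSum (fun k => (k.factorial : ℝ)⁻¹ • M ^ k) (NormedSpace.exp M) :=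
  open scoped Norms.Operator in NormedSpace.exp_series_hasSum_exp' M

theorem hasSum_exp_apply (M : Matrix ι ι ℝ) (i j : ι) :
    HasSum (fun k => (M ^ k) i j / k.factorial) (NormedSpace.exp M i j) := by
  simpa only [smul_apply, smul_eq_mul, inv_mul_eq_div] using
    Pi.hasSum.1 (Pi.hasSum.1 (hasSum_exp M) i) j

theorem real_exp_apply_self_le_exp_apply_self {M : Matrix ι ι ℝ} (hM : ∀ i j, 0 ≤ M i j)
    (i : ι) : Real.exp (M i i) ≤ NormedSpace.exp M i i :=
  hasSum_le (fun k => by gcongr; exact apply_self_pow_le_pow_apply_self hM i k)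
    (Real.exp_eq_exp_ℝ ▸ NormedSpace.expSeries_div_hasSum_exp (M i i)) (hasSum_exp_apply M i i)

theorem exp_smul_one (c : ℝ) :
    NormedSpace.exp (c • 1 : Matrix ι ι ℝ) = Real.exp c • 1 := by
  rw [smul_one_eq_diagonal, smul_one_eq_diagonal, exp_diagonal, Pi.exp_def, Real.exp_eq_exp_ℝ]

theorem exp_add_smul_one (M : Matrix ι ι ℝ) (c : ℝ) :
    NormedSpace.exp (M + c • 1) = Real.exp c • NormedSpace.exp M := by
  rw [exp_add_of_commute _ _ ((Commute.one_right M).smul_right c), exp_smul_one,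
    mul_smul_comm, mul_one]

end Matrix

theorem exp_diagonal_lower_bound_general
    (n : ℕ) (A : Matrix (Fin n) (Fin n) ℝ)
    (hA_nonneg : ∀ u v, 0 ≤ A u v) (h : ℝ) (hh : 0 ≤ h) :
    (∀ u : Fin n, Real.exp (h * A u u) ≤ NormedSpace.exp (h • A) u u) ∧
    ((∀ u, ∑ v, A u v = 1) → ∀ u : Fin n,
      Real.exp (-(h * (1 - A u u))) ≤ NormedSpace.exp (h • (A - 1)) u u ∧
      1 - NormedSpace.exp (h • (A - 1)) u u ≤ 1 - Real.exp (h * (A u u - 1))) := by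
  have hdiag (u : Fin n) : Real.exp (h * A u u) ≤ NormedSpace.exp (h • A) u u := by
    have hhA : ∀ u v, 0 ≤ (h • A) u v := fun u v => mul_nonneg hh (hA_nonneg u v)
    simpa only [Matrix.smul_apply, smul_eq_mul] using real_exp_apply_self_le_exp_apply_self hhA u
  refine ⟨hdiag, fun _ u => ?_⟩
  have hshift :
      NormedSpace.exp (h • (A - 1)) u u = Real.exp (-h) * NormedSpace.exp (h • A) u u := by
    rw [smul_sub, sub_eq_add_neg, ← neg_smul, exp_add_smul_one, Matrix.smul_apply, smul_eq_mul]
  have hlower : Real.exp (-(h * (1 - A u u))) ≤ NormedSpace.exp (h • (A - 1)) u u :=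
    calc Real.exp (-(h * (1 - A u u))) = Real.exp (-h) * Real.exp (h * A u u) := by
          rw [← Real.exp_add]; ring_nf
      _ ≤ _ := by rw [hshift]; gcongr; exact hdiag u
  refine ⟨hlower, ?_⟩
  rw [show h * (A u u - 1) = -(h * (1 - A u u)) by ring]
  linarith

/-- holding-probability bound in Appendix B.2: For an entrywise
nonnegative matrix `A` and `h ≥ 0`, the diagonal entries of the matrix exponential satisfy
`(exp (h • A)) u u ≥ exp (h * A u u)`. Consequently, if `A` is row-stochastic, then
`(exp (h • (A - 1))) u u ≥ exp (-(h * (1 - A u u)))`, i.e.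
`1 - (exp (h • (A - 1))) u u ≤ 1 - exp (h * (A u u - 1))`. -/
theorem exp_diagonal_lower_bound
    (n : ℕ) (hn : 1 ≤ n) (A : Matrix (Fin n) (Fin n) ℝ)
    (hA_nonneg : ∀ u v, 0 ≤ A u v) (h : ℝ) (hh : 0 ≤ h) :
    (∀ u : Fin n, Real.exp (h * A u u) ≤ NormedSpace.exp (h • A) u u) ∧
    ((∀ u, ∑ v, A u v = 1) → ∀ u : Fin n,
      Real.exp (-(h * (1 - A u u))) ≤ NormedSpace.exp (h • (A - 1)) u u ∧
      1 - NormedSpace.exp (h • (A - 1)) u u ≤ 1 - Real.exp (h * (A u u - 1))) :=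
  exp_diagonal_lower_bound_general n A hA_nonneg h hh
end

section
/- Let n ≥ 1, let A be an n×n real row-stochastic matrix, and let μ be a positive probability vector on Fin n satisfying detailed balance μ(u) A u v = μ(v) A v u for all u, v (so A is self-adjoint in L²(μ)). Then for every f : Fin n → ℝ, exp(t • (A − I)) · f converges as t → ∞ to the L²(μ)-orthogonal projection of f onto the eigenspace {g : A g = g}. In particular, if A g = g for some non-constant g, then exp(t • (A − I)) g = g for all t ≥ 0 and the limit of the diffusion started at g is non-constant, so oversmoothing does not occur. -/
/-!
Detailed balance says that `diagonal μ * A` is symmetric, so conjugation by `diagonal √μ` makes `A`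
symmetric; hence `A = V * diagonal a * V⁻¹` with real `a`, and stochasticity forces `a ≤ 1`. Then
`exp (t • (A - 1)) = V * diagonal (exp (t * (a - 1))) * V⁻¹` converges to `P f` with
`P = V * diagonal 1_{a = 1} * V⁻¹`, and `A * P = P`. The semigroup is self-adjoint in `L²(μ)` like
`A` and fixes every `g` with `A g = g`, so `⟨P_t f, g⟩_μ = ⟨f, P_t g⟩_μ = ⟨f, g⟩_μ` for all `t`;
in the limit, `f - P f` is `μ`-orthogonal to `g`.
-/

open Matrix Filter Topology

theorem tendsto_exp_mul_sub_one_atTop {a : ℝ} (ha : a ≤ 1) :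
    Tendsto (fun t => Real.exp (t * (a - 1))) atTop (𝓝 (if a = 1 then 1 else 0)) := by
  split_ifs with h
  · simp [h]
  · exact Real.tendsto_exp_atBot.comp
      (tendsto_id.atTop_mul_const_of_neg (sub_neg.2 (lt_of_le_of_ne ha h)))

section

variable {ι : Type*} [Fintype ι]

theorem norm_mulVec_le_of_stochastic {A : Matrix ι ι ℝ} (hA_nonneg : ∀ u v, 0 ≤ A u v)
    (hA_row : ∀ u, ∑ v, A u v = 1) (w : ι → ℝ) : ‖A *ᵥ w‖ ≤ ‖w‖ :=
  (pi_norm_le_iff_of_nonneg (norm_nonneg w)).2 fun u =>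
    calc ‖∑ v, A u v * w v‖ ≤ ∑ v, A u v * ‖w‖ := by
          refine (norm_sum_le _ _).trans (Finset.sum_le_sum fun v _ => ?_)
          rw [norm_mul, Real.norm_of_nonneg (hA_nonneg u v)]
          exact mul_le_mul_of_nonneg_left (norm_le_pi_norm w v) (hA_nonneg u v)
      _ = ‖w‖ := by rw [← Finset.sum_mul, hA_row, one_mul]

theorem abs_le_one_of_mulVec_eq_smul {A : Matrix ι ι ℝ} (hA_nonneg : ∀ u v, 0 ≤ A u v)
    (hA_row : ∀ u, ∑ v, A u v = 1) {c : ℝ} {w : ι → ℝ} (hw : w ≠ 0) (h : A *ᵥ w = c • w) :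
    |c| ≤ 1 := by
  have := norm_mulVec_le_of_stochastic hA_nonneg hA_row w
  rw [h, norm_smul, Real.norm_eq_abs] at this
  exact (mul_le_iff_le_one_left (norm_pos_iff.2 hw)).1 this

variable [DecidableEq ι]

theorem isSymm_diagonal_mul_mul_diagonal_inv {K : Type*} [Field K] {A : Matrix ι ι K}
    {s : ι → K} (hs : ∀ u, s u ≠ 0) (hA : (diagonal (fun u => s u ^ 2) * A).IsSymm) :
    (diagonal s * A * diagonal s⁻¹).IsSymm := by
  refine IsSymm.ext fun i j => ?_
  have := hA.apply i j
  simp only [diagonal_mul, mul_diagonal, Pi.inv_apply] at this ⊢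
  field_simp [hs i, hs j]
  linear_combination this

theorem exists_eq_conj_diagonal_of_isSymm_diagonal_mul {A : Matrix ι ι ℝ} {μ : ι → ℝ}
    (hμ : ∀ u, 0 < μ u) (hA : (diagonal μ * A).IsSymm) :
    ∃ V : Matrix ι ι ℝ, IsUnit V.det ∧ ∃ a : ι → ℝ, A = V * diagonal a * V⁻¹ := by
  set s : ι → ℝ := fun u => √(μ u)
  have hs : ∀ u, s u ≠ 0 := fun u => (Real.sqrt_pos.2 (hμ u)).ne'
  have hss' : diagonal s * diagonal s⁻¹ = 1 := by simp [diagonal_mul_diagonal, hs]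
  have hs's : diagonal s⁻¹ * diagonal s = 1 := by simp [diagonal_mul_diagonal, hs]
  have hsμ : (fun u => s u ^ 2) = μ := funext fun u => Real.sq_sqrt (hμ u).le
  have hH := isHermitian_iff_isSymm.2 (isSymm_diagonal_mul_mul_diagonal_inv hs (hsμ ▸ hA))
  have hS := hH.spectral_theorem
  simp only [Unitary.conjStarAlgAut_apply, RCLike.ofReal_real_eq_id, Function.id_comp] at hS
  set U : Matrix ι ι ℝ := ↑hH.eigenvectorUnitary
  have hWV : (star U * diagonal s) * (diagonal s⁻¹ * U) = 1 := by
    rw [Matrix.mul_assoc, ← Matrix.mul_assoc (diagonal s), hss', Matrix.one_mul,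
      Unitary.coe_star_mul_self]
  refine ⟨_, isUnit_det_of_left_inverse hWV, hH.eigenvalues, ?_⟩
  calc A = diagonal s⁻¹ * diagonal s * A * (diagonal s⁻¹ * diagonal s) := by
        rw [hs's, Matrix.one_mul, Matrix.mul_one]
    _ = diagonal s⁻¹ * (U * diagonal hH.eigenvalues * star U) * diagonal s := by
        rw [← hS]; simp only [Matrix.mul_assoc]
    _ = _ := by rw [inv_eq_left_inv hWV]; simp only [Matrix.mul_assoc]

theorem isSymm_mul_exp {𝔸 : Type*} [NormedCommRing 𝔸] [NormedAlgebra ℚ 𝔸] [CompleteSpace 𝔸]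
    {M B : Matrix ι ι 𝔸} (hM : M.IsSymm) (hM_det : IsUnit M.det) (hMB : (M * B).IsSymm) :
    (M * NormedSpace.exp B).IsSymm := by
  have hB : Bᵀ = M * B * M⁻¹ := by
    rw [← hMB.eq, transpose_mul, hM.eq, mul_nonsing_inv_cancel_right _ _ hM_det]
  rw [IsSymm, transpose_mul, ← exp_transpose, hB,
    exp_conj _ _ ((isUnit_iff_isUnit_det M).2 hM_det), hM.eq,
    nonsing_inv_mul_cancel_right _ _ hM_det]

theorem isSymm_diagonal_mul_exp_smul_sub_one {A : Matrix ι ι ℝ} {μ : ι → ℝ}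
    (hμ : ∀ u, μ u ≠ 0) (hA : (diagonal μ * A).IsSymm) (t : ℝ) :
    (diagonal μ * NormedSpace.exp (t • (A - 1))).IsSymm := by
  refine isSymm_mul_exp (isSymm_diagonal μ) ?_ ?_
  · rw [det_diagonal]
    exact isUnit_iff_ne_zero.2 (Finset.prod_ne_zero_iff.2 fun u _ => hμ u)
  · rw [Matrix.mul_smul, Matrix.mul_sub, Matrix.mul_one]
    exact (hA.sub (isSymm_diagonal μ)).smul t

theorem sum_mulVec_mul_mul_comm {R : Type*} [CommRing R] {μ : ι → R} {P : Matrix ι ι R}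
    (hP : (diagonal μ * P).IsSymm) (x y : ι → R) :
    ∑ u, (P *ᵥ x) u * y u * μ u = ∑ u, x u * (P *ᵥ y) u * μ u := by
  simp only [mulVec, dotProduct, Finset.sum_mul, Finset.mul_sum]
  rw [Finset.sum_comm]
  refine Finset.sum_congr rfl fun u _ => Finset.sum_congr rfl fun v _ => ?_
  have := hP.apply u v
  simp only [diagonal_mul] at this
  linear_combination x u * y v * this

theorem sum_sub_mul_mul_eq_zero_of_tendsto {α : Type*} {l : Filter α} [l.NeBot] {μ : ι → ℝ}
    {T : α → Matrix ι ι ℝ} (hT : ∀ t, (diagonal μ * T t).IsSymm) {f g L : ι → ℝ}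
    (hg : ∀ t, T t *ᵥ g = g) (hL : Tendsto (fun t => T t *ᵥ f) l (𝓝 L)) :
    ∑ u, (f u - L u) * g u * μ u = 0 := by
  have hconst (t : α) : ∑ u, (T t *ᵥ f) u * g u * μ u = ∑ u, f u * g u * μ u := by
    rw [sum_mulVec_mul_mul_comm (hT t), hg]
  have hlim : Tendsto (fun t => ∑ u, (T t *ᵥ f) u * g u * μ u) l (𝓝 (∑ u, L u * g u * μ u)) :=
    tendsto_finsetSum _ fun u _ => ((tendsto_pi_nhds.1 hL u).mul_const _).mul_const _
  simp only [hconst, tendsto_const_nhds_iff] at hlim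
  simp only [sub_mul, Finset.sum_sub_distrib, hlim, sub_self]

theorem tendsto_conj_diagonal_mulVec {α : Type*} {l : Filter α} (V : Matrix ι ι ℝ)
    {e : α → ι → ℝ} {e₀ : ι → ℝ} (he : Tendsto e l (𝓝 e₀)) (f : ι → ℝ) :
    Tendsto (fun t => (V * diagonal (e t) * V⁻¹) *ᵥ f) l (𝓝 ((V * diagonal e₀ * V⁻¹) *ᵥ f)) :=
  (((continuous_const.matrix_mul continuous_id.matrix_diagonal).matrix_mul
    continuous_const).matrix_mulVec continuous_const).continuousAt.tendsto.comp he

section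

variable {V : Matrix ι ι ℝ} (hV : IsUnit V.det)
include hV

theorem conj_diagonal_mul_conj_diagonal (a b : ι → ℝ) :
    (V * diagonal a * V⁻¹) * (V * diagonal b * V⁻¹) = V * diagonal (a * b) * V⁻¹ := by
  rw [Matrix.mul_assoc (V * _), ← Matrix.mul_assoc V⁻¹, ← Matrix.mul_assoc V⁻¹,
    nonsing_inv_mul _ hV, Matrix.one_mul, ← Matrix.mul_assoc, Matrix.mul_assoc V,
    diagonal_mul_diagonal]
  rfl

theorem exp_conj_diagonal (a : ι → ℝ) :
    NormedSpace.exp (V * diagonal a * V⁻¹) = V * diagonal (fun i => Real.exp (a i)) * V⁻¹ := by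
  rw [exp_conj _ _ ((isUnit_iff_isUnit_det V).2 hV), exp_diagonal, Pi.exp_def, Real.exp_eq_exp_ℝ]

theorem smul_conj_diagonal_sub_one (a : ι → ℝ) (t : ℝ) :
    t • (V * diagonal a * V⁻¹ - 1) = V * diagonal (fun i => t * (a i - 1)) * V⁻¹ := by
  have : (fun i => t * (a i - 1)) = t • fun i => a i - 1 := rfl
  rw [this, diagonal_smul, ← diagonal_sub, diagonal_one, Matrix.mul_smul, Matrix.smul_mul,
    Matrix.mul_sub, Matrix.sub_mul, Matrix.mul_one, mul_nonsing_inv _ hV]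

variable {A : Matrix ι ι ℝ} {a : ι → ℝ} (hA : A = V * diagonal a * V⁻¹)
include hA

theorem le_one_of_stochastic_eq_conj_diagonal (hA_nonneg : ∀ u v, 0 ≤ A u v)
    (hA_row : ∀ u, ∑ v, A u v = 1) (i : ι) : a i ≤ 1 := by
  have hAV : A * V = V * diagonal a := by rw [hA, nonsing_inv_mul_cancel_right _ _ hV]
  have hw : V *ᵥ Pi.single i 1 ≠ 0 := fun h => by
    have := congrFun (congrArg (V⁻¹ *ᵥ ·) h) i
    simp only [mulVec_mulVec, nonsing_inv_mul _ hV, one_mulVec, mulVec_zero] at this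
    simp at this
  have : A *ᵥ (V *ᵥ Pi.single i 1) = a i • V *ᵥ Pi.single i 1 := by
    rw [mulVec_mulVec, hAV, ← mulVec_mulVec, diagonal_mulVec_single, mul_one, ← mulVec_smul,
      ← Pi.single_smul', smul_eq_mul, mul_one]
  exact (le_abs_self _).trans (abs_le_one_of_mulVec_eq_smul hA_nonneg hA_row hw this)

theorem conj_diagonal_mulVec_eq_self {e : ι → ℝ} (he : ∀ i, a i = 1 → e i = 1) {g : ι → ℝ}
    (hg : A *ᵥ g = g) : (V * diagonal e * V⁻¹) *ᵥ g = g := by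
  have hag : diagonal a *ᵥ (V⁻¹ *ᵥ g) = V⁻¹ *ᵥ g := by
    conv_rhs => rw [← hg, hA]
    rw [mulVec_mulVec, mulVec_mulVec, Matrix.mul_assoc V, nonsing_inv_mul_cancel_left _ _ hV]
  have heg : diagonal e *ᵥ (V⁻¹ *ᵥ g) = V⁻¹ *ᵥ g := by
    ext i
    have hai := congrFun hag i
    rw [mulVec_diagonal] at hai ⊢
    by_cases hi : a i = 1
    · rw [he i hi, one_mul]
    · have : (a i - 1) * (V⁻¹ *ᵥ g) i = 0 := by linear_combination hai
      rw [(mul_eq_zero.1 this).resolve_left (sub_ne_zero.2 hi), mul_zero]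
  rw [← mulVec_mulVec, ← mulVec_mulVec, heg, mulVec_mulVec, mul_nonsing_inv _ hV, one_mulVec]

theorem mul_conj_diagonal_ite_eq_one :
    A * (V * diagonal (fun i => if a i = 1 then 1 else 0) * V⁻¹) =
      V * diagonal (fun i => if a i = 1 then 1 else 0) * V⁻¹ := by
  rw [hA, conj_diagonal_mul_conj_diagonal hV]
  congr 3 with i
  by_cases hi : a i = 1 <;> simp [hi]

theorem exp_smul_sub_one_eq_conj_diagonal (t : ℝ) :
    NormedSpace.exp (t • (A - 1)) = V * diagonal (fun i => Real.exp (t * (a i - 1))) * V⁻¹ := by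
  rw [hA, smul_conj_diagonal_sub_one hV, exp_conj_diagonal hV]

theorem exp_smul_sub_one_mulVec_of_mulVec_eq_self {g : ι → ℝ} (hg : A *ᵥ g = g) (t : ℝ) :
    NormedSpace.exp (t • (A - 1)) *ᵥ g = g := by
  rw [exp_smul_sub_one_eq_conj_diagonal hV hA]
  exact conj_diagonal_mulVec_eq_self hV hA (fun i hi => by simp [hi]) hg

theorem tendsto_exp_smul_sub_one_mulVec (ha : ∀ i, a i ≤ 1) (f : ι → ℝ) :
    Tendsto (fun t : ℝ => NormedSpace.exp (t • (A - 1)) *ᵥ f) atTop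
      (𝓝 ((V * diagonal (fun i => if a i = 1 then 1 else 0) * V⁻¹) *ᵥ f)) := by
  simp only [exp_smul_sub_one_eq_conj_diagonal hV hA]
  exact tendsto_conj_diagonal_mulVec V
    (tendsto_pi_nhds.2 fun i => tendsto_exp_mul_sub_one_atTop (ha i)) f

end

end

theorem convergence_to_orthogonal_projection_general
    (n : ℕ) (A : Matrix (Fin n) (Fin n) ℝ)
    (hA_nonneg : ∀ u v, 0 ≤ A u v) (hA_row : ∀ u, ∑ v, A u v = 1)
    (μ : Fin n → ℝ) (hμ_pos : ∀ u, 0 < μ u)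
    (hdb : ∀ u v, μ u * A u v = μ v * A v u) :
    (∀ f : Fin n → ℝ, ∃ L : Fin n → ℝ,
      A.mulVec L = L ∧
      (∀ g : Fin n → ℝ, A.mulVec g = g → ∑ u, (f u - L u) * g u * μ u = 0) ∧
      Tendsto (fun t : ℝ => (NormedSpace.exp (t • (A - 1))).mulVec f)
        atTop (nhds L)) ∧
    (∀ g : Fin n → ℝ, A.mulVec g = g →
      ∀ t : ℝ, (NormedSpace.exp (t • (A - 1))).mulVec g = g) ∧
    (∀ g : Fin n → ℝ, A.mulVec g = g → (¬ ∃ c : ℝ, g = fun _ => c) →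
      ∃ L : Fin n → ℝ,
        Tendsto (fun t : ℝ => (NormedSpace.exp (t • (A - 1))).mulVec g)
          atTop (nhds L) ∧ ¬ ∃ c : ℝ, L = fun _ => c) := by
  have hA : (diagonal μ * A).IsSymm := IsSymm.ext fun u v => by
    simpa only [diagonal_mul] using hdb v u
  obtain ⟨V, hV, a, hAV⟩ := exists_eq_conj_diagonal_of_isSymm_diagonal_mul hμ_pos hA
  have hlim := tendsto_exp_smul_sub_one_mulVec hV hAV
    (le_one_of_stochastic_eq_conj_diagonal hV hAV hA_nonneg hA_row)
  have hsymm := isSymm_diagonal_mul_exp_smul_sub_one (fun u => (hμ_pos u).ne') hA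
  have hfix (g : Fin n → ℝ) (hg : A *ᵥ g = g) :=
    exp_smul_sub_one_mulVec_of_mulVec_eq_self hV hAV hg
  refine ⟨fun f => ⟨_, ?_, fun g hg => sum_sub_mul_mul_eq_zero_of_tendsto hsymm (hfix g hg)
    (hlim f), hlim f⟩, hfix, fun g hg hg_nonconst => ⟨g, ?_, hg_nonconst⟩⟩
  · rw [mulVec_mulVec, mul_conj_diagonal_ite_eq_one hV hAV]
  · simpa only [hfix g hg] using tendsto_const_nhds

/-- spectral argument of Theorem 4.3 / Appendix A.3: For a
row-stochastic matrix `A` that is self-adjoint in `L²(μ)` (detailed balance with positive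
probability vector `μ`), the diffusion `exp (t • (A - 1)) f` converges as `t → ∞` to the
`L²(μ)`-orthogonal projection `L` of `f` onto the eigenspace `{g : A g = g}` (i.e. `L` is
in the eigenspace and `f - L` is `L²(μ)`-orthogonal to it). In particular any eigenvector
`g` with `A g = g` is fixed by the semigroup for all `t`, and if such a `g` is
non-constant then the limit of the diffusion started at `g` is non-constant:
oversmoothing does not occur. -/
theorem convergence_to_orthogonal_projection
    (n : ℕ) (hn : 1 ≤ n) (A : Matrix (Fin n) (Fin n) ℝ)
    (hA_nonneg : ∀ u v, 0 ≤ A u v) (hA_row : ∀ u, ∑ v, A u v = 1)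
    (μ : Fin n → ℝ) (hμ_pos : ∀ u, 0 < μ u) (hμ_sum : ∑ u, μ u = 1)
    (hdb : ∀ u v, μ u * A u v = μ v * A v u) :
    (∀ f : Fin n → ℝ, ∃ L : Fin n → ℝ,
      A.mulVec L = L ∧
      (∀ g : Fin n → ℝ, A.mulVec g = g → ∑ u, (f u - L u) * g u * μ u = 0) ∧
      Tendsto (fun t : ℝ => (NormedSpace.exp (t • (A - 1))).mulVec f)
        atTop (nhds L)) ∧
    (∀ g : Fin n → ℝ, A.mulVec g = g →
      ∀ t : ℝ, (NormedSpace.exp (t • (A - 1))).mulVec g = g) ∧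
    (∀ g : Fin n → ℝ, A.mulVec g = g → (¬ ∃ c : ℝ, g = fun _ => c) →
      ∃ L : Fin n → ℝ,
        Tendsto (fun t : ℝ => (NormedSpace.exp (t • (A - 1))).mulVec g)
          atTop (nhds L) ∧ ¬ ∃ c : ℝ, L = fun _ => c) :=
  convergence_to_orthogonal_projection_general n A hA_nonneg hA_row μ hμ_pos hdb
end
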